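/- Let v ∈ V, let F : V → ℝ, and assume w_j ≤ w_0 for all j ∈ V (so v ∈ win_v and win_v ≠ ∅). For each x ∈ win*_v set C_x = {x} ∪ {i ∈ win⁻_v | next_v(i) = x}, and suppose i'_x ∈ C_x minimizes the function i ↦ cost_F(x,i) over C_x (these values are well-defined: for i ∈ C_x with i ≠ x one has i ∈ win⁻_x and next_x(i) = x, while x ∈ win*_x). Then min_{x ∈ win*_v} cost_F(v, i'_x) = min_{i ∈ win_v} cost_F(v,i). -/

import Mathlib

open Finset
open scoped Classical

noncomputable section

variable {V : Type} [Fintype V] [PartialOrder V]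

/-- The chain `T[v,i]` : all vertices `p` with `v ≤ p ≤ i`. -/
def chainCC (v i : V) : Finset V := univ.filter (fun p => v ≤ p ∧ p ≤ i)

/-- The chain `T[v,i)` : `T[v,i]` without `i`. -/
def chainCO (v i : V) : Finset V := (chainCC v i).erase i

/-- `p` is the parent of `j`. -/
def IsParent (p j : V) : Prop := p < j ∧ ¬ ∃ q, p < q ∧ q < j

/-- `u` is s-maximal in `T_v`. -/
def SMax (s : V → ℝ) (v u : V) : Prop := v ≤ u ∧ ∀ p ∈ chainCO v u, s p < s u

/-- The window of `v`. -/
def win (w : V → ℝ) (w0 : ℝ) (v : V) : Finset V :=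
  univ.filter (fun i => v ≤ i ∧ ∑ j ∈ chainCC v i, w j ≤ w0)

/-- `win*_v`: the s-maximal vertices of the window of `v`. -/
def winStar (w : V → ℝ) (w0 : ℝ) (s : V → ℝ) (v : V) : Finset V :=
  (win w w0 v).filter (fun i => SMax s v i)

/-- `win⁻_v = win_v \ win*_v`. -/
def winMinus (w : V → ℝ) (w0 : ℝ) (s : V → ℝ) (v : V) : Finset V :=
  win w w0 v \ winStar w w0 s v

/-- `next_v(u)`: the greatest (closest to `u`) s-maximal element of `T[v,u)`,
if such a greatest element exists (junk value `v` otherwise). -/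
def nxt (s : V → ℝ) (v u : V) : V :=
  if h : ∃ x ∈ chainCO v u, SMax s v x ∧ ∀ y ∈ chainCO v u, SMax s v y → y ≤ x
  then h.choose else v

/-- The vertices `j` outside `T[v,i]` whose parent lies in `T[v,i]`. -/
def branchOff (v i : V) : Finset V :=
  univ.filter (fun j => j ∉ chainCC v i ∧ ∃ p ∈ chainCC v i, IsParent p j)

/-- `sum_F(v,i) = Σ F(j)` over `j ∉ T[v,i]` whose parent lies in `T[v,i]`. -/
def sumF (F : V → ℝ) (v i : V) : ℝ := ∑ j ∈ branchOff v i, F j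

/-- `cost_F(v,i)`: `sum_F(v,i) + s_i` if `i ∈ win*_v`, and
`sum_F(v,i) + s_{next_v(i)}` otherwise (in particular for `i ∈ win⁻_v`). -/
def costF (w : V → ℝ) (w0 : ℝ) (s : V → ℝ) (F : V → ℝ) (v i : V) : ℝ :=
  if i ∈ winStar w w0 s v then sumF F v i + s i else sumF F v i + s (nxt s v i)

end

/-!
The classes `C_x`, `x ∈ win*_v`, cover `win_v`: a vertex of `win⁻_v` lies in the class of its
`next_v`, which is again in the window since the weights are nonnegative. On `C_x` the costs
`cost_F(v,·)` and `cost_F(x,·)` differ by a constant, the `F`-weight of the branches leaving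
`T[v,x)` away from `x`, so `i'_x` also minimizes `cost_F(v,·)` on `C_x`; the minimum over the
window is therefore the minimum of the class minima.
-/

def IsTreeOrder (V : Type) [PartialOrder V] : Prop :=
  ∀ a b c : V, a ≤ c → b ≤ c → a ≤ b ∨ b ≤ a

section Tree

variable {V : Type} [PartialOrder V]

theorem IsParent.unique (htree : IsTreeOrder V) {p q j : V} (hp : IsParent p j)
    (hq : IsParent q j) : p = q := by
  rcases htree p q j hp.1.le hq.1.le with h | h
  · exact h.eq_of_not_lt fun hpq => hp.2 ⟨q, hpq, hq.1⟩
  · exact (h.eq_of_not_lt fun hqp => hq.2 ⟨p, hqp, hp.1⟩).symm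

variable [Fintype V]

theorem mem_chainCC {v i p : V} : p ∈ chainCC v i ↔ v ≤ p ∧ p ≤ i := by
  simp [chainCC]

theorem mem_chainCO {v i p : V} : p ∈ chainCO v i ↔ v ≤ p ∧ p ≤ i ∧ p ≠ i := by
  simp only [chainCO, mem_erase, mem_chainCC]
  tauto

theorem mem_chainCO_iff_lt {v i p : V} : p ∈ chainCO v i ↔ v ≤ p ∧ p < i := by
  rw [mem_chainCO, lt_iff_le_and_ne]

theorem chainCC_self (v : V) : chainCC v v = {v} := by
  ext p
  simp [mem_chainCC, le_antisymm_iff, and_comm]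

theorem chainCC_subset_chainCC {v u x i : V} (hvu : v ≤ u) (hxi : x ≤ i) :
    chainCC u x ⊆ chainCC v i := fun p hp => by
  rw [mem_chainCC] at hp ⊢
  exact ⟨hvu.trans hp.1, hp.2.trans hxi⟩

variable {s : V → ℝ}

theorem sMax_self (s : V → ℝ) (v : V) : SMax s v v :=
  ⟨le_rfl, by simp [chainCO, chainCC_self]⟩

theorem SMax.trans (htree : IsTreeOrder V) {v x u : V} (hvx : SMax s v x) (hxu : x < u)
    (hxu' : SMax s x u) : SMax s v u := by
  refine ⟨hvx.1.trans hxu.le, fun p hp => ?_⟩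
  obtain ⟨hvp, hpu⟩ := mem_chainCO_iff_lt.mp hp
  have hsxu : s x < s u := hxu'.2 x (mem_chainCO_iff_lt.mpr ⟨le_rfl, hxu⟩)
  rcases htree p x u hpu.le hxu.le with hpx | hxp
  · rcases hpx.eq_or_lt with rfl | hpx
    · exact hsxu
    · exact (hvx.2 p (mem_chainCO_iff_lt.mpr ⟨hvp, hpx⟩)).trans hsxu
  · exact hxu'.2 p (mem_chainCO_iff_lt.mpr ⟨hxp, hpu⟩)

theorem nxt_spec (htree : IsTreeOrder V) {v i : V} (hvi : v < i) :
    nxt s v i ∈ chainCO v i ∧ SMax s v (nxt s v i) ∧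
      ∀ y ∈ chainCO v i, SMax s v y → y ≤ nxt s v i := by
  have hex : ∃ x ∈ chainCO v i, SMax s v x ∧ ∀ y ∈ chainCO v i, SMax s v y → y ≤ x := by
    obtain ⟨m, hm⟩ := ((chainCO v i).filter (SMax s v)).exists_maximal
      ⟨v, mem_filter.mpr ⟨mem_chainCO_iff_lt.mpr ⟨le_rfl, hvi⟩, sMax_self s v⟩⟩
    obtain ⟨hmi, hsm⟩ := mem_filter.mp hm.1
    refine ⟨m, hmi, hsm, fun y hyi hsy => ?_⟩
    rcases htree y m i (mem_chainCO.mp hyi).2.1 (mem_chainCO.mp hmi).2.1 with hym | hmy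
    · exact hym
    · exact hm.2 (mem_filter.mpr ⟨hyi, hsy⟩) hmy
  rw [nxt, dif_pos hex]
  exact hex.choose_spec

theorem nxt_nxt_eq (htree : IsTreeOrder V) {v j : V} (hvj : v < j) :
    nxt s (nxt s v j) j = nxt s v j := by
  obtain ⟨hxj, hsx, hgreatest⟩ := nxt_spec (s := s) htree hvj
  set x := nxt s v j
  have hxj : x < j := (mem_chainCO_iff_lt.mp hxj).2
  obtain ⟨hy, hsy, -⟩ := nxt_spec (s := s) htree hxj
  obtain ⟨hxy, hyj⟩ := mem_chainCO_iff_lt.mp hy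
  refine le_antisymm ?_ hxy
  rcases hxy.eq_or_lt with hxy | hxy
  · exact hxy.ge
  · exact hgreatest _ (mem_chainCO_iff_lt.mpr ⟨hsx.1.trans hxy.le, hyj⟩) (hsx.trans htree hxy hsy)

end Tree

section Window

variable {V : Type} [Fintype V] [PartialOrder V] {w : V → ℝ} {w0 : ℝ} {s : V → ℝ}

/-- `C_x = {x} ∪ {i ∈ win⁻_v | next_v(i) = x}`. -/
noncomputable def winClass (w : V → ℝ) (w0 : ℝ) (s : V → ℝ) (v x : V) : Finset V :=
  insert x ((winMinus w w0 s v).filter (fun j => nxt s v j = x))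

theorem mem_win {v i : V} : i ∈ win w w0 v ↔ v ≤ i ∧ ∑ j ∈ chainCC v i, w j ≤ w0 := by
  simp [win]

theorem mem_win_of_mem_win (hw : ∀ i, 0 ≤ w i) {v u x i : V} (hvu : v ≤ u) (hux : u ≤ x)
    (hxi : x ≤ i) (hi : i ∈ win w w0 v) : x ∈ win w w0 u :=
  mem_win.mpr ⟨hux, (sum_le_sum_of_subset_of_nonneg (chainCC_subset_chainCC hvu hxi)
    fun j _ _ => hw j).trans (mem_win.mp hi).2⟩

theorem self_mem_winStar_of_mem_win (hw : ∀ i, 0 ≤ w i) {v x : V} (hx : x ∈ win w w0 v) :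
    x ∈ winStar w w0 s x :=
  mem_filter.mpr ⟨mem_win_of_mem_win hw (mem_win.mp hx).1 le_rfl le_rfl hx, sMax_self s x⟩

theorem lt_of_mem_winMinus {v j : V} (hj : j ∈ winMinus w w0 s v) : v < j := by
  obtain ⟨hjwin, hjstar⟩ := mem_sdiff.mp hj
  refine (mem_win.mp hjwin).1.lt_of_ne ?_
  rintro rfl
  exact hjstar (mem_filter.mpr ⟨hjwin, sMax_self s v⟩)

theorem mem_win_of_mem_winClass {v x j : V} (hx : x ∈ winStar w w0 s v)
    (hj : j ∈ winClass w w0 s v x) : j ∈ win w w0 v := by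
  rcases mem_insert.mp hj with rfl | hj
  · exact (mem_filter.mp hx).1
  · exact (mem_sdiff.mp (mem_filter.mp hj).1).1

theorem exists_mem_winClass (htree : IsTreeOrder V) (hw : ∀ i, 0 ≤ w i) {v i : V}
    (hi : i ∈ win w w0 v) : ∃ x ∈ winStar w w0 s v, i ∈ winClass w w0 s v x := by
  by_cases hstar : i ∈ winStar w w0 s v
  · exact ⟨i, hstar, mem_insert_self i _⟩
  have hminus : i ∈ winMinus w w0 s v := mem_sdiff.mpr ⟨hi, hstar⟩
  obtain ⟨hxi, hsx, -⟩ := nxt_spec (s := s) htree (lt_of_mem_winMinus hminus)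
  obtain ⟨hvx, hxi⟩ := mem_chainCO_iff_lt.mp hxi
  exact ⟨nxt s v i, mem_filter.mpr ⟨mem_win_of_mem_win hw le_rfl hvx hxi.le hi, hsx⟩,
    mem_insert_of_mem (mem_filter.mpr ⟨hminus, rfl⟩)⟩

end Window

section Cost

variable {V : Type} [Fintype V] [PartialOrder V]

noncomputable def sideBranches (v x : V) : Finset V :=
  univ.filter (fun j => ¬ j ≤ x ∧ ∃ p ∈ chainCO v x, IsParent p j)

theorem branchOff_eq_sideBranches_union (htree : IsTreeOrder V) {v x j : V} (hvx : v ≤ x)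
    (hxj : x ≤ j) : branchOff v j = sideBranches v x ∪ branchOff x j := by
  ext k
  simp only [branchOff, sideBranches, mem_union, mem_filter, mem_univ, true_and,
    mem_chainCC, mem_chainCO_iff_lt]
  constructor
  · rintro ⟨hk, p, ⟨hvp, hpj⟩, hpk⟩
    have hkj : ¬ k ≤ j := fun h => hk ⟨hvp.trans hpk.1.le, h⟩
    rcases htree p x j hpj hxj with hpx | hxp
    · rcases hpx.eq_or_lt with rfl | hpx
      · exact Or.inr ⟨fun h => hkj h.2, p, ⟨le_rfl, hpj⟩, hpk⟩
      · exact Or.inl ⟨fun hkx => hkj (hkx.trans hxj), p, ⟨hvp, hpx⟩, hpk⟩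
    · exact Or.inr ⟨fun h => hkj h.2, p, ⟨hxp, hpj⟩, hpk⟩
  · rintro (⟨hkx, p, ⟨hvp, hpx⟩, hpk⟩ | ⟨hk, p, ⟨hxp, hpj⟩, hpk⟩)
    · refine ⟨fun ⟨_, hkj⟩ => ?_, p, ⟨hvp, hpx.le.trans hxj⟩, hpk⟩
      -- `k` lies above `x`, so `x` would sit strictly between `p` and its child `k`
      rcases htree k x j hkj hxj with hkx' | hxk
      · exact hkx hkx'
      · exact hpk.2 ⟨x, hpx, hxk.lt_of_ne fun h => hkx h.ge⟩
    · exact ⟨fun h => hk ⟨hxp.trans hpk.1.le, h.2⟩, p, ⟨hvx.trans hxp, hpj⟩, hpk⟩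

theorem disjoint_sideBranches_branchOff (htree : IsTreeOrder V) {v x j : V} :
    Disjoint (sideBranches v x) (branchOff x j) := by
  refine disjoint_left.mpr fun k hk hk' => ?_
  obtain ⟨-, p, hp, hpk⟩ := (mem_filter.mp hk).2
  obtain ⟨-, q, hq, hqk⟩ := (mem_filter.mp hk').2
  obtain rfl := hpk.unique htree hqk
  exact (mem_chainCO_iff_lt.mp hp).2.not_ge (mem_chainCC.mp hq).1

theorem sumF_eq_add_sumF (htree : IsTreeOrder V) (F : V → ℝ) {v x j : V} (hvx : v ≤ x)
    (hxj : x ≤ j) : sumF F v j = ∑ k ∈ sideBranches v x, F k + sumF F x j := by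
  rw [sumF, sumF, branchOff_eq_sideBranches_union htree hvx hxj,
    sum_union (disjoint_sideBranches_branchOff htree)]

variable {w : V → ℝ} {w0 : ℝ} {s : V → ℝ}

theorem costF_eq_add_costF_of_mem_winClass (htree : IsTreeOrder V) (hw : ∀ i, 0 ≤ w i)
    (F : V → ℝ) {v x j : V} (hx : x ∈ winStar w w0 s v) (hj : j ∈ winClass w w0 s v x) :
    costF w w0 s F v j = ∑ k ∈ sideBranches v x, F k + costF w w0 s F x j := by
  obtain ⟨hxwin, hsx⟩ := mem_filter.mp hx
  rcases mem_insert.mp hj with rfl | hj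
  · rw [costF, if_pos hx, costF, if_pos (self_mem_winStar_of_mem_win hw hxwin),
      sumF_eq_add_sumF htree F hsx.1 le_rfl, add_assoc]
  obtain ⟨hminus, rfl⟩ := mem_filter.mp hj
  have hvj := lt_of_mem_winMinus hminus
  have hxj := (mem_chainCO_iff_lt.mp (nxt_spec (s := s) htree hvj).1).2
  have hjstar : j ∉ winStar w w0 s (nxt s v j) := fun h =>
    (mem_sdiff.mp hminus).2 (mem_filter.mpr ⟨(mem_sdiff.mp hminus).1,
      hsx.trans htree hxj (mem_filter.mp h).2⟩)
  rw [costF, if_neg (mem_sdiff.mp hminus).2, costF, if_neg hjstar, nxt_nxt_eq htree hvj,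
    sumF_eq_add_sumF htree F hsx.1 hxj.le, add_assoc]

end Cost

theorem stmt_4_general (V : Type) [Fintype V] [PartialOrder V]
    (htree : ∀ a b c : V, a ≤ c → b ≤ c → a ≤ b ∨ b ≤ a)
    (w : V → ℝ) (s : V → ℝ) (w0 : ℝ)
    (hw : ∀ i : V, 0 ≤ w i)
    (F : V → ℝ)
    (v : V) (i' : V → V)
    (hi' : ∀ x ∈ winStar w w0 s v,
      i' x ∈ insert x ((winMinus w w0 s v).filter (fun j => nxt s v j = x)) ∧
      ∀ j ∈ insert x ((winMinus w w0 s v).filter (fun j => nxt s v j = x)),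
        costF w w0 s F x (i' x) ≤ costF w w0 s F x j) :
    sInf {c : ℝ | ∃ x ∈ winStar w w0 s v, c = costF w w0 s F v (i' x)}
      = sInf {c : ℝ | ∃ i ∈ win w w0 v, c = costF w w0 s F v i} := by
  refine csInf_eq_csInf_of_forall_exists_le ?_ ?_
  · rintro _ ⟨x, hx, rfl⟩
    exact ⟨_, ⟨i' x, mem_win_of_mem_winClass hx (hi' x hx).1, rfl⟩, le_rfl⟩
  · rintro _ ⟨i, hi, rfl⟩
    obtain ⟨x, hx, hix⟩ := exists_mem_winClass (s := s) htree hw hi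
    refine ⟨_, ⟨x, hx, rfl⟩, ?_⟩
    rw [costF_eq_add_costF_of_mem_winClass htree hw F hx (hi' x hx).1,
      costF_eq_add_costF_of_mem_winClass htree hw F hx hix]
    exact add_le_add_right ((hi' x hx).2 i hix) _

theorem stmt_4 (V : Type) [Fintype V] [Nonempty V] [PartialOrder V]
    (htree : ∀ a b c : V, a ≤ c → b ≤ c → a ≤ b ∨ b ≤ a)
    (w : V → ℝ) (s : V → ℝ) (w0 : ℝ)
    (hw : ∀ i : V, 0 ≤ w i) (hw0 : 0 ≤ w0)
    (hwin : ∀ j : V, w j ≤ w0)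
    (F : V → ℝ)
    (v : V) (i' : V → V)
    (hi' : ∀ x ∈ winStar w w0 s v,
      i' x ∈ insert x ((winMinus w w0 s v).filter (fun j => nxt s v j = x)) ∧
      ∀ j ∈ insert x ((winMinus w w0 s v).filter (fun j => nxt s v j = x)),
        costF w w0 s F x (i' x) ≤ costF w w0 s F x j) :
    sInf {c : ℝ | ∃ x ∈ winStar w w0 s v, c = costF w w0 s F v (i' x)}
      = sInf {c : ℝ | ∃ i ∈ win w w0 v, c = costF w w0 s F v i} :=
  stmt_4_general V htree w s w0 hw F v i' hi'
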